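/- There exist δ > 0 and Q ∈ ℕ such that for all θ ∈ [0,1]² (identified with θ₁ + iθ₂ ∈ ℂ), all 0 < h < 1, all κ with 1 ≤ κ ≤ δ/h, and all α, β, α', β' ∈ {0, 1, …, N_{κ,h}} where N_{κ,h} = ⌊π/(2hκ)⌋: if (𝒜_{θ,α}(κ,h) + 𝒜_{θ,β}(κ,h)) ∩ (𝒜_{θ,α'}(κ,h) + 𝒜_{θ,β'}(κ,h)) ≠ ∅, then |α − α'| + |β − β'| ≤ Q or |α − β'| + |β − α'| ≤ Q. -/

import Mathlib

open Real Pointwise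

noncomputable section

/-- The first quadrant relative to `θ`: `{z : Re(z-θ) ≥ 0, Im(z-θ) ≥ 0}`. -/
def Cpp (θ : ℂ) : Set ℂ := {z : ℂ | 0 ≤ (z - θ).re ∧ 0 ≤ (z - θ).im}

/-- The angular sector
`𝒜_{θ,α}(κ,h) = {z ∈ 𝒞^θ_{++} : |h|z-θ| - 1| ≤ κ²h², arg(z-θ) ∈ [αhκ, (α+1)hκ)}`.
(For `z` in the first quadrant relative to `θ`, the principal argument agrees with the
argument taken in `[0,2π)`.) -/
def Aset (θ : ℂ) (κ h : ℝ) (α : ℕ) : Set ℂ :=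
  {z : ℂ | z ∈ Cpp θ ∧ |h * ‖z - θ‖ - 1| ≤ κ^2 * h^2 ∧
    Complex.arg (z - θ) ∈ Set.Ico ((α : ℝ) * h * κ) (((α : ℝ) + 1) * h * κ)}

/-- `Ee x = exp (i x)`. -/
def Ee (x : ℝ) : ℂ := Complex.exp (x * Complex.I)

lemma Ee_abs (x : ℝ) : ‖Ee x‖ = 1 := Complex.norm_exp_ofReal_mul_I x

lemma Ee_add_Ee (a b : ℝ) :
    Ee a + Ee b = ((2 * Real.cos ((a - b) / 2) : ℝ) : ℂ) * Ee ((a + b) / 2) := by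
  unfold Ee
  rw [show ((a : ℂ)) * Complex.I = ((a + b) / 2 : ℝ) * Complex.I + ((a - b) / 2 : ℝ) * Complex.I
        by push_cast; ring,
      show ((b : ℂ)) * Complex.I = ((a + b) / 2 : ℝ) * Complex.I + (-((a - b) / 2) : ℝ) * Complex.I
        by push_cast; ring,
      Complex.exp_add, Complex.exp_add]
  simp only [Complex.exp_mul_I]
  push_cast
  rw [Complex.cos_neg, Complex.sin_neg]
  ring

lemma Ee_sub_Ee (a b : ℝ) :
    Ee a - Ee b = ((2 * Real.sin ((a - b) / 2) : ℝ) : ℂ) * Complex.I * Ee ((a + b) / 2) := by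
  unfold Ee
  rw [show ((a : ℂ)) * Complex.I = ((a + b) / 2 : ℝ) * Complex.I + ((a - b) / 2 : ℝ) * Complex.I
        by push_cast; ring,
      show ((b : ℂ)) * Complex.I = ((a + b) / 2 : ℝ) * Complex.I + (-((a - b) / 2) : ℝ) * Complex.I
        by push_cast; ring,
      Complex.exp_add, Complex.exp_add]
  simp only [Complex.exp_mul_I]
  push_cast
  rw [Complex.cos_neg, Complex.sin_neg]
  ring

lemma cos_close {t x y : ℝ} (ht : 0 < t) (hx0 : 0 ≤ x) (hy : y ≤ π / 4)
    (hxy : x ≤ y) (hc : Real.cos x - Real.cos y ≤ 2 * t ^ 2) : y - x ≤ 4 * t := by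
  have hpi : (0:ℝ) < π := Real.pi_pos
  have h1 : 2 / π * ((x + y) / 2) ≤ Real.sin ((x + y) / 2) :=
    Real.mul_le_sin (by linarith) (by linarith)
  have h2 : 2 / π * ((y - x) / 2) ≤ Real.sin ((y - x) / 2) :=
    Real.mul_le_sin (by linarith) (by linarith)
  have hcc : Real.cos x - Real.cos y = 2 * Real.sin ((x + y) / 2) * Real.sin ((y - x) / 2) := by
    rw [Real.cos_sub_cos, show (x - y) / 2 = -((y - x) / 2) by ring, Real.sin_neg]
    ring
  have hprod : 2 / π * ((x + y) / 2) * (2 / π * ((y - x) / 2)) ≤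
      Real.sin ((x + y) / 2) * Real.sin ((y - x) / 2) :=
    mul_le_mul h1 h2 (mul_nonneg (by positivity) (by linarith))
      (le_trans (mul_nonneg (by positivity) (by linarith)) h1)
  have hA : 2 / π * ((x + y) / 2) * (2 / π * ((y - x) / 2)) ≤ t ^ 2 := by linarith
  have hEq : 2 / π * ((x + y) / 2) * (2 / π * ((y - x) / 2)) = (x + y) * (y - x) / π ^ 2 := by
    field_simp
  rw [hEq, div_le_iff₀ (by positivity)] at hA
  have hxy2 : (y - x) * (y - x) ≤ (x + y) * (y - x) := by nlinarith
  have hsq : (y - x) ^ 2 ≤ π ^ 2 * t ^ 2 := by nlinarith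
  have hpp : π ^ 2 ≤ 16 := by nlinarith [Real.pi_pos, Real.pi_lt_four]
  have h16 : (y - x) ^ 2 ≤ 16 * t ^ 2 := by nlinarith [sq_nonneg t]
  nlinarith [h16, ht]

lemma s_close {t u : ℝ} (ht : 0 < t) (ht1 : t ≤ 1 / 100) (h0 : 0 ≤ u) (h1 : u ≤ π / 2)
    (hsin : Real.sin (u / 2) ≤ 3 * t ^ 2) : u ≤ t := by
  have hpi : (0:ℝ) < π := Real.pi_pos
  have hj := Real.mul_le_sin (x := u / 2) (by linarith) (by linarith)
  have h4 : π < 4 := Real.pi_lt_four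
  have hB : 2 / π * (u / 2) ≤ 3 * t ^ 2 := le_trans hj hsin
  rw [div_mul_eq_mul_div, div_le_iff₀ (by positivity)] at hB
  nlinarith [sq_nonneg t]

lemma abs_real_mul_Ee (c x : ℝ) : ‖(c : ℂ) * Ee x‖ = |c| := by
  rw [norm_mul, Ee_abs, mul_one, Complex.norm_real, Real.norm_eq_abs]

set_option maxHeartbeats 1000000 in
lemma key_trig {t a b a' b' : ℝ} (ht : 0 < t) (ht1 : t ≤ 1 / 100)
    (ha0 : 0 ≤ a) (ha1 : a ≤ π / 2) (hb0 : 0 ≤ b) (hb1 : b ≤ π / 2)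
    (ha0' : 0 ≤ a') (ha1' : a' ≤ π / 2) (hb0' : 0 ≤ b') (hb1' : b' ≤ π / 2)
    (hn : ‖Ee a + Ee b - (Ee a' + Ee b')‖ ≤ 4 * t ^ 2) :
    (|a - a'| ≤ 9 * t ∧ |b - b'| ≤ 9 * t) ∨ (|a - b'| ≤ 9 * t ∧ |b - a'| ≤ 9 * t) := by
  have hpi : (0:ℝ) < π := Real.pi_pos
  set s : ℝ := (a + b) / 2 with hs
  set d : ℝ := (a - b) / 2 with hd
  set s' : ℝ := (a' + b') / 2 with hs'
  set d' : ℝ := (a' - b') / 2 with hd'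
  rw [Ee_add_Ee a b, Ee_add_Ee a' b'] at hn
  have hd4 : |d| ≤ π / 4 := abs_le.mpr ⟨by rw [hd]; linarith, by rw [hd]; linarith⟩
  have hd4' : |d'| ≤ π / 4 := abs_le.mpr ⟨by rw [hd']; linarith, by rw [hd']; linarith⟩
  have h07 : (7/10 : ℝ) ≤ Real.cos (π / 4) := by
    rw [Real.cos_pi_div_four]
    nlinarith [Real.sq_sqrt (by norm_num : (0:ℝ) ≤ 2), Real.sqrt_nonneg 2]
  have hcosd : (7/10 : ℝ) ≤ Real.cos d := by
    have := Real.cos_le_cos_of_nonneg_of_le_pi (abs_nonneg d) (by linarith) hd4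
    rw [Real.cos_abs] at this; linarith
  have hcosd' : (7/10 : ℝ) ≤ Real.cos d' := by
    have := Real.cos_le_cos_of_nonneg_of_le_pi (abs_nonneg d') (by linarith) hd4'
    rw [Real.cos_abs] at this; linarith
  -- Step 1 : compare moduli
  have hm : |2 * Real.cos d - 2 * Real.cos d'| ≤ 4 * t ^ 2 := by
    have h := abs_norm_sub_norm_le
      (((2 * Real.cos d : ℝ) : ℂ) * Ee s) (((2 * Real.cos d' : ℝ) : ℂ) * Ee s')
    rw [abs_real_mul_Ee, abs_real_mul_Ee, abs_of_nonneg (by linarith : (0:ℝ) ≤ 2 * Real.cos d),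
      abs_of_nonneg (by linarith : (0:ℝ) ≤ 2 * Real.cos d')] at h
    exact le_trans h hn
  have hmm : abs (Real.cos |d| - Real.cos |d'|) ≤ 2 * t ^ 2 := by
    rw [Real.cos_abs, Real.cos_abs]
    rw [abs_le] at hm ⊢; constructor <;> linarith [hm.1, hm.2]
  -- Step 2 : the half-difference angles are close in absolute value
  have hdd : |d| - |d'| ≤ 4 * t ∧ |d'| - |d| ≤ 4 * t := by
    rcases le_total |d| |d'| with h | h
    · refine ⟨by linarith [abs_nonneg d, abs_nonneg d', ht], ?_⟩
      exact cos_close ht (abs_nonneg d) hd4' h (by linarith [(abs_le.mp hmm).2])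
    · refine ⟨?_, by linarith [abs_nonneg d, abs_nonneg d', ht]⟩
      refine cos_close ht (abs_nonneg d') hd4 h ?_
      linarith [(abs_le.mp hmm).1]
  -- Step 3 : the half-sum angles are close
  have hE : ‖Ee s - Ee s'‖ ≤ 6 * t ^ 2 := by
    have hkey : ((2 * Real.cos d' : ℝ) : ℂ) * (Ee s - Ee s') =
        ((2 * Real.cos d' - 2 * Real.cos d : ℝ) : ℂ) * Ee s +
        (((2 * Real.cos d : ℝ) : ℂ) * Ee s - ((2 * Real.cos d' : ℝ) : ℂ) * Ee s') := by
      push_cast; ring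
    have h1 : ‖((2 * Real.cos d' : ℝ) : ℂ) * (Ee s - Ee s')‖ ≤
        |2 * Real.cos d' - 2 * Real.cos d| + 4 * t ^ 2 := by
      rw [hkey]
      refine le_trans (norm_add_le _ _) ?_
      rw [abs_real_mul_Ee]
      gcongr
    rw [norm_mul, Complex.norm_real, Real.norm_eq_abs,
      abs_of_nonneg (by linarith : (0:ℝ) ≤ 2 * Real.cos d')] at h1
    rw [abs_sub_comm] at h1
    have hA0 : 0 ≤ ‖Ee s - Ee s'‖ := norm_nonneg _
    have h2 : (7/5 : ℝ) * ‖Ee s - Ee s'‖ ≤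
        2 * Real.cos d' * ‖Ee s - Ee s'‖ :=
      mul_le_mul_of_nonneg_right (by linarith) hA0
    linarith
  have hsin : |Real.sin ((s - s') / 2)| ≤ 3 * t ^ 2 := by
    rw [Ee_sub_Ee, norm_mul, norm_mul, Complex.norm_real, Real.norm_eq_abs, Complex.norm_I, Ee_abs,
      mul_one, mul_one] at hE
    rw [abs_mul, abs_of_nonneg (by norm_num : (0:ℝ) ≤ 2)] at hE
    linarith
  have hs2 : s ≤ π / 2 := by rw [hs]; linarith
  have hs0 : 0 ≤ s := by rw [hs]; linarith
  have hs2' : s' ≤ π / 2 := by rw [hs']; linarith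
  have hs0' : 0 ≤ s' := by rw [hs']; linarith
  have hss : |s - s'| ≤ t := by
    rcases le_total s' s with h | h
    · have := s_close ht ht1 (by linarith) (by linarith)
        (le_trans (le_abs_self _) hsin)
      rw [abs_of_nonneg (by linarith)]; linarith
    · have h2 : Real.sin ((s' - s) / 2) ≤ 3 * t ^ 2 := by
        have : Real.sin ((s' - s) / 2) ≤ |Real.sin ((s - s') / 2)| := by
          rw [show (s' - s) / 2 = -((s - s') / 2) by ring, Real.sin_neg]
          exact neg_le_abs _
        linarith
      have := s_close ht ht1 (by linarith) (by linarith) h2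
      rw [abs_of_nonpos (by linarith)]; linarith
  -- Step 4 : combine
  obtain ⟨hss1, hss2⟩ := abs_le.mp hss
  have ea : a = s + d := by rw [hs, hd]; ring
  have eb : b = s - d := by rw [hs, hd]; ring
  have ea' : a' = s' + d' := by rw [hs', hd']; ring
  have eb' : b' = s' - d' := by rw [hs', hd']; ring
  rcases le_total 0 d with hd0 | hd0 <;> rcases le_total 0 d' with hd0' | hd0'
  · rw [abs_of_nonneg hd0, abs_of_nonneg hd0'] at hdd
    exact Or.inl ⟨abs_le.mpr ⟨by linarith [hdd.1, hdd.2], by linarith [hdd.1, hdd.2]⟩,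
      abs_le.mpr ⟨by linarith [hdd.1, hdd.2], by linarith [hdd.1, hdd.2]⟩⟩
  · rw [abs_of_nonneg hd0, abs_of_nonpos hd0'] at hdd
    exact Or.inr ⟨abs_le.mpr ⟨by linarith [hdd.1, hdd.2], by linarith [hdd.1, hdd.2]⟩,
      abs_le.mpr ⟨by linarith [hdd.1, hdd.2], by linarith [hdd.1, hdd.2]⟩⟩
  · rw [abs_of_nonpos hd0, abs_of_nonneg hd0'] at hdd
    exact Or.inr ⟨abs_le.mpr ⟨by linarith [hdd.1, hdd.2], by linarith [hdd.1, hdd.2]⟩,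
      abs_le.mpr ⟨by linarith [hdd.1, hdd.2], by linarith [hdd.1, hdd.2]⟩⟩
  · rw [abs_of_nonpos hd0, abs_of_nonpos hd0'] at hdd
    exact Or.inl ⟨abs_le.mpr ⟨by linarith [hdd.1, hdd.2], by linarith [hdd.1, hdd.2]⟩,
      abs_le.mpr ⟨by linarith [hdd.1, hdd.2], by linarith [hdd.1, hdd.2]⟩⟩

lemma idx_close {t : ℝ} (ht : 0 < t) {x x' : ℝ} {α α' : ℕ}
    (h1 : (α : ℝ) * t ≤ x) (h2 : x < ((α : ℝ) + 1) * t)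
    (h3 : (α' : ℝ) * t ≤ x') (h4 : x' < ((α' : ℝ) + 1) * t)
    (h5 : |x - x'| ≤ 9 * t) : |(α : ℤ) - (α' : ℤ)| ≤ 10 := by
  by_contra hcon
  push_neg at hcon
  have h11 : (11 : ℤ) ≤ |(α : ℤ) - (α' : ℤ)| := hcon
  obtain ⟨hx1, hx2⟩ := abs_le.mp h5
  rcases abs_cases ((α : ℤ) - (α' : ℤ)) with ⟨he, _⟩ | ⟨he, _⟩
  · rw [he] at h11
    have hZ : (α' : ℤ) + 11 ≤ (α : ℤ) := by omega
    have hR : (α' : ℝ) + 11 ≤ (α : ℝ) := by exact_mod_cast hZ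
    have := mul_le_mul_of_nonneg_right hR ht.le
    linarith
  · rw [he] at h11
    have hZ : (α : ℤ) + 11 ≤ (α' : ℤ) := by omega
    have hR : (α : ℝ) + 11 ≤ (α' : ℝ) := by exact_mod_cast hZ
    have := mul_le_mul_of_nonneg_right hR ht.le
    linarith

lemma Aset_props {θ : ℂ} {κ h : ℝ} {α : ℕ} {z : ℂ} (hz : z ∈ Aset θ κ h α) :
    0 ≤ Complex.arg (z - θ) ∧ Complex.arg (z - θ) ≤ π / 2 ∧
    |h * ‖z - θ‖ - 1| ≤ κ ^ 2 * h ^ 2 ∧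
    (α : ℝ) * h * κ ≤ Complex.arg (z - θ) ∧
    Complex.arg (z - θ) < ((α : ℝ) + 1) * h * κ ∧
    z - θ = ((‖z - θ‖ : ℝ) : ℂ) * Ee (Complex.arg (z - θ)) := by
  obtain ⟨⟨hre, him⟩, habs, harg⟩ := hz
  exact ⟨Complex.arg_nonneg_iff.mpr him, Complex.arg_le_pi_div_two_iff.mpr (Or.inl hre),
    habs, harg.1, harg.2, (Complex.norm_mul_exp_arg_mul_I (z - θ)).symm⟩

set_option maxHeartbeats 1000000 in
/-- The arithmetic/geometric lemma: for `δ` small enough there is `Q ∈ ℕ` such that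
overlapping sector sum-sets force closeness of the angular indices. -/
theorem sector_sumset_lemma :
    ∃ δ : ℝ, 0 < δ ∧ ∃ Q : ℕ,
      ∀ θ : ℂ, θ.re ∈ Set.Icc (0:ℝ) 1 → θ.im ∈ Set.Icc (0:ℝ) 1 →
      ∀ h κ : ℝ, 0 < h → h < 1 → 1 ≤ κ → κ ≤ δ / h →
      ∀ α β α' β' : ℕ,
        α ≤ Nat.floor (π / (2 * h * κ)) → β ≤ Nat.floor (π / (2 * h * κ)) →
        α' ≤ Nat.floor (π / (2 * h * κ)) → β' ≤ Nat.floor (π / (2 * h * κ)) →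
        ((Aset θ κ h α + Aset θ κ h β) ∩ (Aset θ κ h α' + Aset θ κ h β')).Nonempty →
        (|(α : ℤ) - (α' : ℤ)| + |(β : ℤ) - (β' : ℤ)| ≤ (Q : ℤ) ∨
         |(α : ℤ) - (β' : ℤ)| + |(β : ℤ) - (α' : ℤ)| ≤ (Q : ℤ)) := by
  refine ⟨1/100, by norm_num, 20, ?_⟩
  intro θ _ _ h κ hh hh1 hκ hκδ α β α' β' _ _ _ _ hne
  obtain ⟨w, hw1, hw2⟩ := hne
  rw [Set.mem_add] at hw1 hw2
  obtain ⟨z₁, hz₁, z₂, hz₂, h12⟩ := hw1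
  obtain ⟨z₃, hz₃, z₄, hz₄, h34⟩ := hw2
  set t := h * κ with htdef
  have hκ0 : (0:ℝ) < κ := lt_of_lt_of_le one_pos hκ
  have ht : 0 < t := mul_pos hh hκ0
  have ht1 : t ≤ 1 / 100 := by
    have := (le_div_iff₀ hh).mp hκδ
    rw [htdef]; linarith [mul_comm h κ, this]
  have ht2 : κ ^ 2 * h ^ 2 = t ^ 2 := by rw [htdef]; ring
  obtain ⟨hφ₁0, hφ₁1, hr₁, hi₁l, hi₁u, he₁⟩ := Aset_props hz₁
  obtain ⟨hφ₂0, hφ₂1, hr₂, hi₂l, hi₂u, he₂⟩ := Aset_props hz₂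
  obtain ⟨hφ₃0, hφ₃1, hr₃, hi₃l, hi₃u, he₃⟩ := Aset_props hz₃
  obtain ⟨hφ₄0, hφ₄1, hr₄, hi₄l, hi₄u, he₄⟩ := Aset_props hz₄
  set φ₁ := Complex.arg (z₁ - θ)
  set φ₂ := Complex.arg (z₂ - θ)
  set φ₃ := Complex.arg (z₃ - θ)
  set φ₄ := Complex.arg (z₄ - θ)
  set r₁ := ‖z₁ - θ‖
  set r₂ := ‖z₂ - θ‖
  set r₃ := ‖z₃ - θ‖
  set r₄ := ‖z₄ - θ‖
  have hsum : (z₁ - θ) + (z₂ - θ) = (z₃ - θ) + (z₄ - θ) := by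
    have : z₁ + z₂ = z₃ + z₄ := by rw [h12, h34]
    linear_combination this
  set X₁ : ℂ := ((1 - h * r₁ : ℝ) : ℂ) * Ee φ₁ with hX₁
  set X₂ : ℂ := ((1 - h * r₂ : ℝ) : ℂ) * Ee φ₂ with hX₂
  set X₃ : ℂ := ((1 - h * r₃ : ℝ) : ℂ) * Ee φ₃ with hX₃
  set X₄ : ℂ := ((1 - h * r₄ : ℝ) : ℂ) * Ee φ₄ with hX₄
  have hEkey : Ee φ₁ + Ee φ₂ - (Ee φ₃ + Ee φ₄)
      = X₁ + X₂ - X₃ - X₄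
        + (h : ℂ) * (((z₁ - θ) + (z₂ - θ)) - ((z₃ - θ) + (z₄ - θ))) := by
    rw [hX₁, hX₂, hX₃, hX₄]
    push_cast
    linear_combination (-(h:ℂ)) * he₁ + (-(h:ℂ)) * he₂ + (h:ℂ) * he₃ + (h:ℂ) * he₄
  have hnorm : ‖Ee φ₁ + Ee φ₂ - (Ee φ₃ + Ee φ₄)‖ ≤ 4 * t ^ 2 := by
    rw [hEkey, hsum, sub_self, mul_zero, add_zero]
    have htri : ‖X₁ + X₂ - X₃ - X₄‖ ≤
        ‖X₁‖ + ‖X₂‖ + ‖X₃‖ + ‖X₄‖ := by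
      linarith [norm_sub_le (X₁ + X₂ - X₃) X₄, norm_sub_le (X₁ + X₂) X₃, norm_add_le X₁ X₂]
    have b₁ : ‖X₁‖ ≤ t ^ 2 := by
      rw [hX₁, abs_real_mul_Ee, abs_sub_comm, ← ht2]; exact hr₁
    have b₂ : ‖X₂‖ ≤ t ^ 2 := by
      rw [hX₂, abs_real_mul_Ee, abs_sub_comm, ← ht2]; exact hr₂
    have b₃ : ‖X₃‖ ≤ t ^ 2 := by
      rw [hX₃, abs_real_mul_Ee, abs_sub_comm, ← ht2]; exact hr₃
    have b₄ : ‖X₄‖ ≤ t ^ 2 := by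
      rw [hX₄, abs_real_mul_Ee, abs_sub_comm, ← ht2]; exact hr₄
    linarith
  have p₁l : (α : ℝ) * t ≤ φ₁ := by rw [htdef]; linarith [mul_assoc (α : ℝ) h κ, hi₁l]
  have p₁u : φ₁ < ((α : ℝ) + 1) * t := by rw [htdef]; linarith [mul_assoc ((α : ℝ) + 1) h κ, hi₁u]
  have p₂l : (β : ℝ) * t ≤ φ₂ := by rw [htdef]; linarith [mul_assoc (β : ℝ) h κ, hi₂l]
  have p₂u : φ₂ < ((β : ℝ) + 1) * t := by rw [htdef]; linarith [mul_assoc ((β : ℝ) + 1) h κ, hi₂u]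
  have p₃l : (α' : ℝ) * t ≤ φ₃ := by rw [htdef]; linarith [mul_assoc (α' : ℝ) h κ, hi₃l]
  have p₃u : φ₃ < ((α' : ℝ) + 1) * t := by
    rw [htdef]; linarith [mul_assoc ((α' : ℝ) + 1) h κ, hi₃u]
  have p₄l : (β' : ℝ) * t ≤ φ₄ := by rw [htdef]; linarith [mul_assoc (β' : ℝ) h κ, hi₄l]
  have p₄u : φ₄ < ((β' : ℝ) + 1) * t := by
    rw [htdef]; linarith [mul_assoc ((β' : ℝ) + 1) h κ, hi₄u]
  rcases key_trig ht ht1 hφ₁0 hφ₁1 hφ₂0 hφ₂1 hφ₃0 hφ₃1 hφ₄0 hφ₄1 hnorm with ⟨hA, hB⟩ | ⟨hA, hB⟩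
  · left
    have q1 := idx_close ht p₁l p₁u p₃l p₃u hA
    have q2 := idx_close ht p₂l p₂u p₄l p₄u hB
    calc |(α : ℤ) - (α' : ℤ)| + |(β : ℤ) - (β' : ℤ)| ≤ 10 + 10 := add_le_add q1 q2
      _ ≤ ((20 : ℕ) : ℤ) := by norm_num
  · right
    have q1 := idx_close ht p₁l p₁u p₄l p₄u hA
    have q2 := idx_close ht p₂l p₂u p₃l p₃u hB
    calc |(α : ℤ) - (β' : ℤ)| + |(β : ℤ) - (α' : ℤ)| ≤ 10 + 10 := add_le_add q1 q2
      _ ≤ ((20 : ℕ) : ℤ) := by norm_num
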